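/- Let C ∈ ℝ^{r1×r2×r3} and Δ1 ∈ ℝ^{n1×r1}, Δ2 ∈ ℝ^{n2×r2}, and let U2', U3' have orthonormal columns of appropriate dimensions, and U1* have orthonormal columns. Then |⟨ C ×₁ Δ1 ×₂ U2' ×₃ U3' , C ×₁ U1* ×₂ Δ2 ×₃ U3' ⟩| ≤ √r3 · Λ̄(C)² · ‖U1*^⊤Δ1‖_F · ‖U2'^⊤Δ2‖_F ≤ √r3 · Λ̄(C)² · ‖Δ1‖_F · ‖Δ2‖_F, where Λ̄(C) := max_k ‖M_k(C)‖. -/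

import Mathlib

open Matrix

/-- Multilinear (Tucker) product of a core tensor with three matrices. -/
def mlprod {n1 n2 n3 r1 r2 r3 : ℕ}
    (C : Fin r1 → Fin r2 → Fin r3 → ℝ)
    (U1 : Matrix (Fin n1) (Fin r1) ℝ) (U2 : Matrix (Fin n2) (Fin r2) ℝ)
    (U3 : Matrix (Fin n3) (Fin r3) ℝ) :
    Fin n1 → Fin n2 → Fin n3 → ℝ :=
  fun i1 i2 i3 => ∑ j1, ∑ j2, ∑ j3, C j1 j2 j3 * U1 i1 j1 * U2 i2 j2 * U3 i3 j3

/-- Euclidean inner product of two tensors. -/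
def tinner {n1 n2 n3 : ℕ} (T S : Fin n1 → Fin n2 → Fin n3 → ℝ) : ℝ :=
  ∑ i1, ∑ i2, ∑ i3, T i1 i2 i3 * S i1 i2 i3

/-- Frobenius norm of a matrix. -/
noncomputable def frob {m n : ℕ} (A : Matrix (Fin m) (Fin n) ℝ) : ℝ :=
  Real.sqrt (∑ i, ∑ j, A i j ^ 2)

/-- ℓ2 operator norm of a matrix. -/
noncomputable def opn {ι κ : Type*} [Fintype ι] [Fintype κ]
    (M : Matrix ι κ ℝ) : ℝ :=
  sSup { t | ∃ v : κ → ℝ, (∑ j, v j ^ 2) ≤ 1 ∧ t = Real.sqrt (∑ i, M.mulVec v i ^ 2) }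

/-- `Λ̄(C)`: the largest operator norm among the three matricizations of `C`. -/
noncomputable def lambdaBar {r1 r2 r3 : ℕ} (C : Fin r1 → Fin r2 → Fin r3 → ℝ) : ℝ :=
  max (opn (Matrix.of fun i (p : Fin r2 × Fin r3) => C i p.1 p.2))
    (max (opn (Matrix.of fun j (p : Fin r1 × Fin r3) => C p.1 j p.2))
      (opn (Matrix.of fun k (p : Fin r1 × Fin r2) => C p.1 p.2 k)))

/-! ### Auxiliary sum-manipulation lemmas -/

lemma sum_mul_sum_pair {n r s : ℕ} (f : Fin r → ℝ) (g : Fin s → ℝ)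
    (X : Fin n → Fin r → ℝ) (Y : Fin n → Fin s → ℝ) :
    ∑ i, (∑ j, f j * X i j) * (∑ k, g k * Y i k)
      = ∑ j, ∑ k, (f j * g k) * ∑ i, X i j * Y i k := by
  have h1 : ∀ i : Fin n, (∑ j, f j * X i j) * (∑ k, g k * Y i k)
      = ∑ j, ∑ k, (f j * X i j) * (g k * Y i k) := fun i =>
    Finset.sum_mul_sum _ _ _ _
  rw [Finset.sum_congr rfl fun i _ => h1 i, Finset.sum_comm]
  refine Finset.sum_congr rfl fun j _ => ?_
  rw [Finset.sum_comm]
  refine Finset.sum_congr rfl fun k _ => ?_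
  rw [Finset.mul_sum]
  exact Finset.sum_congr rfl fun i _ => by ring

lemma ortho_entry {n r : ℕ} {U : Matrix (Fin n) (Fin r) ℝ} (hU : Uᵀ * U = 1)
    (j k : Fin r) : ∑ i, U i j * U i k = if j = k then 1 else 0 := by
  have := congrFun (congrFun hU j) k
  simpa [Matrix.mul_apply, Matrix.one_apply, Matrix.transpose_apply] using this

lemma contract_ortho {n r : ℕ} {U : Matrix (Fin n) (Fin r) ℝ} (hU : Uᵀ * U = 1)
    (f g : Fin r → ℝ) :
    ∑ i, (∑ j, f j * U i j) * (∑ k, g k * U i k) = ∑ j, f j * g j := by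
  refine (sum_mul_sum_pair f g U U).trans ?_
  refine Finset.sum_congr rfl fun j _ => ?_
  rw [Finset.sum_congr rfl fun k (_ : k ∈ Finset.univ) => by rw [ortho_entry hU j k]]
  simp [Finset.sum_ite_eq, mul_ite]

lemma mlprod_rw {n1 n2 n3 r1 r2 r3 : ℕ}
    (C : Fin r1 → Fin r2 → Fin r3 → ℝ)
    (U1 : Matrix (Fin n1) (Fin r1) ℝ) (U2 : Matrix (Fin n2) (Fin r2) ℝ)
    (U3 : Matrix (Fin n3) (Fin r3) ℝ) (i1 : Fin n1) (i2 : Fin n2) (i3 : Fin n3) :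
    mlprod C U1 U2 U3 i1 i2 i3
      = ∑ j3, (∑ j2, (∑ j1, C j1 j2 j3 * U1 i1 j1) * U2 i2 j2) * U3 i3 j3 := by
  unfold mlprod
  calc ∑ j1, ∑ j2, ∑ j3, C j1 j2 j3 * U1 i1 j1 * U2 i2 j2 * U3 i3 j3
      = ∑ j1, ∑ j3, ∑ j2, C j1 j2 j3 * U1 i1 j1 * U2 i2 j2 * U3 i3 j3 :=
        Finset.sum_congr rfl fun _ _ => Finset.sum_comm
    _ = ∑ j3, ∑ j1, ∑ j2, C j1 j2 j3 * U1 i1 j1 * U2 i2 j2 * U3 i3 j3 :=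
        Finset.sum_comm
    _ = ∑ j3, ∑ j2, ∑ j1, C j1 j2 j3 * U1 i1 j1 * U2 i2 j2 * U3 i3 j3 :=
        Finset.sum_congr rfl fun _ _ => Finset.sum_comm
    _ = ∑ j3, (∑ j2, (∑ j1, C j1 j2 j3 * U1 i1 j1) * U2 i2 j2) * U3 i3 j3 := by
        simp only [Finset.sum_mul]

lemma key_identity {n1 n2 n3 r1 r2 r3 : ℕ}
    (C : Fin r1 → Fin r2 → Fin r3 → ℝ)
    (Δ1 : Matrix (Fin n1) (Fin r1) ℝ) (Δ2 : Matrix (Fin n2) (Fin r2) ℝ)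
    (U1s : Matrix (Fin n1) (Fin r1) ℝ)
    (U2' : Matrix (Fin n2) (Fin r2) ℝ) (U3' : Matrix (Fin n3) (Fin r3) ℝ)
    (hU3 : U3'ᵀ * U3' = 1) :
    tinner (mlprod C Δ1 U2' U3') (mlprod C U1s Δ2 U3')
      = ∑ j3, ∑ j2, ∑ k2,
          (∑ j1, ∑ k1, (C j1 j2 j3 * C k1 k2 j3) * ∑ i, Δ1 i j1 * U1s i k1)
            * ∑ i, U2' i j2 * Δ2 i k2 := by
  unfold tinner
  calc
    ∑ i1, ∑ i2, ∑ i3, mlprod C Δ1 U2' U3' i1 i2 i3 * mlprod C U1s Δ2 U3' i1 i2 i3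
      = ∑ i1, ∑ i2, ∑ j3,
          (∑ j2, (∑ j1, C j1 j2 j3 * Δ1 i1 j1) * U2' i2 j2)
            * (∑ k2, (∑ k1, C k1 k2 j3 * U1s i1 k1) * Δ2 i2 k2) := by
        refine Finset.sum_congr rfl fun i1 _ => Finset.sum_congr rfl fun i2 _ => ?_
        rw [Finset.sum_congr rfl fun i3 (_ : i3 ∈ Finset.univ) => by
          rw [mlprod_rw C Δ1 U2' U3' i1 i2 i3, mlprod_rw C U1s Δ2 U3' i1 i2 i3]]
        exact contract_ortho hU3 _ _
    _ = ∑ i1, ∑ j3, ∑ i2,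
          (∑ j2, (∑ j1, C j1 j2 j3 * Δ1 i1 j1) * U2' i2 j2)
            * (∑ k2, (∑ k1, C k1 k2 j3 * U1s i1 k1) * Δ2 i2 k2) :=
        Finset.sum_congr rfl fun _ _ => Finset.sum_comm
    _ = ∑ j3, ∑ i1, ∑ i2,
          (∑ j2, (∑ j1, C j1 j2 j3 * Δ1 i1 j1) * U2' i2 j2)
            * (∑ k2, (∑ k1, C k1 k2 j3 * U1s i1 k1) * Δ2 i2 k2) :=
        Finset.sum_comm
    _ = ∑ j3, ∑ i1, ∑ j2, ∑ k2,
          ((∑ j1, C j1 j2 j3 * Δ1 i1 j1) * (∑ k1, C k1 k2 j3 * U1s i1 k1))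
            * ∑ i2, U2' i2 j2 * Δ2 i2 k2 :=
        Finset.sum_congr rfl fun j3 _ => Finset.sum_congr rfl fun i1 _ =>
          sum_mul_sum_pair _ _ _ _
    _ = ∑ j3, ∑ j2, ∑ k2, ∑ i1,
          ((∑ j1, C j1 j2 j3 * Δ1 i1 j1) * (∑ k1, C k1 k2 j3 * U1s i1 k1))
            * ∑ i2, U2' i2 j2 * Δ2 i2 k2 := by
        refine Finset.sum_congr rfl fun j3 _ => ?_
        rw [Finset.sum_comm]
        exact Finset.sum_congr rfl fun _ _ => Finset.sum_comm
    _ = ∑ j3, ∑ j2, ∑ k2,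
          (∑ i1, (∑ j1, C j1 j2 j3 * Δ1 i1 j1) * (∑ k1, C k1 k2 j3 * U1s i1 k1))
            * ∑ i2, U2' i2 j2 * Δ2 i2 k2 := by
        simp only [Finset.sum_mul]
    _ = ∑ j3, ∑ j2, ∑ k2,
          (∑ j1, ∑ k1, (C j1 j2 j3 * C k1 k2 j3) * ∑ i, Δ1 i j1 * U1s i k1)
            * ∑ i, U2' i j2 * Δ2 i k2 := by
        refine Finset.sum_congr rfl fun j3 _ => Finset.sum_congr rfl fun j2 _ =>
          Finset.sum_congr rfl fun k2 _ => ?_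
        congr 1
        exact sum_mul_sum_pair _ _ Δ1 U1s

/-! ### Operator-norm lemmas -/

lemma opn_zero_mem {ι κ : Type*} [Fintype ι] [Fintype κ] (M : Matrix ι κ ℝ) :
    (0 : ℝ) ∈ { t | ∃ v : κ → ℝ, (∑ j, v j ^ 2) ≤ 1 ∧ t = Real.sqrt (∑ i, M.mulVec v i ^ 2) } := by
  refine ⟨0, by simp, ?_⟩
  simp [Matrix.mulVec_zero]

lemma opn_bdd {ι κ : Type*} [Fintype ι] [Fintype κ] (M : Matrix ι κ ℝ) :
    BddAbove { t | ∃ v : κ → ℝ, (∑ j, v j ^ 2) ≤ 1 ∧ t = Real.sqrt (∑ i, M.mulVec v i ^ 2) } := by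
  refine ⟨Real.sqrt (∑ i, ∑ j, M i j ^ 2), fun t ht => ?_⟩
  obtain ⟨v, hv, rfl⟩ := ht
  apply Real.sqrt_le_sqrt
  refine Finset.sum_le_sum fun i _ => ?_
  have h1 : (M.mulVec v i) ^ 2 ≤ (∑ j, M i j ^ 2) * ∑ j, v j ^ 2 := by
    simpa [Matrix.mulVec, dotProduct] using
      Finset.sum_mul_sq_le_sq_mul_sq Finset.univ (fun j => M i j) v
  calc (M.mulVec v i) ^ 2 ≤ (∑ j, M i j ^ 2) * ∑ j, v j ^ 2 := h1
    _ ≤ (∑ j, M i j ^ 2) * 1 := by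
        apply mul_le_mul_of_nonneg_left hv
        positivity
    _ = ∑ j, M i j ^ 2 := mul_one _

lemma opn_nonneg {ι κ : Type*} [Fintype ι] [Fintype κ] (M : Matrix ι κ ℝ) :
    0 ≤ opn M :=
  le_csSup (opn_bdd M) (opn_zero_mem M)

lemma opn_mulVec_sq {ι κ : Type*} [Fintype ι] [Fintype κ] (M : Matrix ι κ ℝ)
    (v : κ → ℝ) : ∑ i, M.mulVec v i ^ 2 ≤ opn M ^ 2 * ∑ j, v j ^ 2 := by
  by_cases h : ∑ j, v j ^ 2 = 0
  · have hv : v = 0 := by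
      funext j
      have := (Finset.sum_eq_zero_iff_of_nonneg (fun j _ => sq_nonneg (v j))).1 h j
        (Finset.mem_univ j)
      exact pow_eq_zero_iff (n := 2) (by norm_num) |>.1 this
    simp [hv, Matrix.mulVec_zero, h]
  · have hs : 0 < ∑ j, v j ^ 2 :=
      lt_of_le_of_ne (Finset.sum_nonneg fun j _ => sq_nonneg (v j)) (Ne.symm h)
    set s := ∑ j, v j ^ 2 with hsdef
    have hsq : Real.sqrt s > 0 := Real.sqrt_pos.2 hs
    set w : κ → ℝ := fun j => v j / Real.sqrt s with hw
    have hw1 : ∑ j, w j ^ 2 = 1 := by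
      simp only [hw, div_pow, ← Finset.sum_div, Real.sq_sqrt hs.le]
      field_simp
      exact hsdef.symm
    have hmem : Real.sqrt (∑ i, M.mulVec w i ^ 2) ≤ opn M :=
      le_csSup (opn_bdd M) ⟨w, hw1.le, rfl⟩
    have hmw : ∀ i, M.mulVec w i = M.mulVec v i / Real.sqrt s := by
      intro i
      simp only [hw, Matrix.mulVec, dotProduct, div_eq_mul_inv, Finset.sum_mul]
      exact Finset.sum_congr rfl fun j _ => by ring
    have hsum : ∑ i, M.mulVec w i ^ 2 = (∑ i, M.mulVec v i ^ 2) / s := by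
      simp only [hmw, div_pow, Real.sq_sqrt hs.le, ← Finset.sum_div]
    have hnn : 0 ≤ ∑ i, M.mulVec v i ^ 2 := Finset.sum_nonneg fun i _ => sq_nonneg _
    have : (∑ i, M.mulVec v i ^ 2) / s ≤ opn M ^ 2 := by
      have h3 : Real.sqrt ((∑ i, M.mulVec v i ^ 2) / s) ≤ opn M := hsum ▸ hmem
      calc (∑ i, M.mulVec v i ^ 2) / s
          = Real.sqrt ((∑ i, M.mulVec v i ^ 2) / s) ^ 2 :=
            (Real.sq_sqrt (by positivity)).symm
        _ ≤ opn M ^ 2 := pow_le_pow_left₀ (Real.sqrt_nonneg _) h3 2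
    calc ∑ i, M.mulVec v i ^ 2 = ((∑ i, M.mulVec v i ^ 2) / s) * s := by
          field_simp
      _ ≤ opn M ^ 2 * s := mul_le_mul_of_nonneg_right this hs.le

lemma opn_le_of_bound {ι κ : Type*} [Fintype ι] [Fintype κ] (M : Matrix ι κ ℝ)
    (c : ℝ) (hc : 0 ≤ c)
    (h : ∀ v : κ → ℝ, (∑ j, v j ^ 2) ≤ 1 → ∑ i, M.mulVec v i ^ 2 ≤ c ^ 2) :
    opn M ≤ c := by
  refine csSup_le ⟨0, opn_zero_mem M⟩ fun t ht => ?_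
  obtain ⟨v, hv, rfl⟩ := ht
  calc Real.sqrt (∑ i, M.mulVec v i ^ 2) ≤ Real.sqrt (c ^ 2) :=
        Real.sqrt_le_sqrt (h v hv)
    _ = c := Real.sqrt_sq hc

lemma dual_bound {ι κ : Type*} [Fintype ι] [Fintype κ] (M : Matrix ι κ ℝ)
    (c : ℝ)
    (h : ∀ v : κ → ℝ, ∑ i, M.mulVec v i ^ 2 ≤ c ^ 2 * ∑ j, v j ^ 2)
    (u : ι → ℝ) : ∑ j, Mᵀ.mulVec u j ^ 2 ≤ c ^ 2 * ∑ i, u i ^ 2 := by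
  set y : κ → ℝ := fun j => Mᵀ.mulVec u j with hy
  set s := ∑ j, y j ^ 2 with hs
  have hkey : s = ∑ i, u i * M.mulVec y i := by
    calc s = ∑ j, y j * (∑ i, M i j * u i) := by
          refine Finset.sum_congr rfl fun j _ => ?_
          rw [sq]
          congr 1
      _ = ∑ j, ∑ i, u i * (M i j * y j) := by
          refine Finset.sum_congr rfl fun j _ => ?_
          rw [Finset.mul_sum]
          exact Finset.sum_congr rfl fun i _ => by ring
      _ = ∑ i, ∑ j, u i * (M i j * y j) := Finset.sum_comm
      _ = ∑ i, u i * M.mulVec y i := by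
          refine Finset.sum_congr rfl fun i _ => ?_
          rw [← Finset.mul_sum]
          rfl
  have hcs : s ^ 2 ≤ (∑ i, u i ^ 2) * ∑ i, M.mulVec y i ^ 2 := by
    rw [hkey]
    exact Finset.sum_mul_sq_le_sq_mul_sq Finset.univ u (fun i => M.mulVec y i)
  have hMy : ∑ i, M.mulVec y i ^ 2 ≤ c ^ 2 * s := h y
  have hsnn : 0 ≤ s := Finset.sum_nonneg fun j _ => sq_nonneg _
  have hunn : 0 ≤ ∑ i, u i ^ 2 := Finset.sum_nonneg fun i _ => sq_nonneg _
  rcases eq_or_lt_of_le hsnn with hs0 | hs0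
  · show s ≤ _
    rw [← hs0]
    positivity
  · have : s ^ 2 ≤ (∑ i, u i ^ 2) * (c ^ 2 * s) :=
      hcs.trans (mul_le_mul_of_nonneg_left hMy hunn)
    have h2 : s * s ≤ (c ^ 2 * ∑ i, u i ^ 2) * s := by
      rw [← sq]
      calc s ^ 2 ≤ (∑ i, u i ^ 2) * (c ^ 2 * s) := this
        _ = (c ^ 2 * ∑ i, u i ^ 2) * s := by ring
    exact le_of_mul_le_mul_right h2 hs0

/-! ### Frobenius-norm lemmas -/

def F2 {m n : ℕ} (A : Matrix (Fin m) (Fin n) ℝ) : ℝ := ∑ i, ∑ j, A i j ^ 2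

lemma F2_nonneg {m n : ℕ} (A : Matrix (Fin m) (Fin n) ℝ) : 0 ≤ F2 A :=
  Finset.sum_nonneg fun _ _ => Finset.sum_nonneg fun _ _ => sq_nonneg _

lemma frob_eq {m n : ℕ} (A : Matrix (Fin m) (Fin n) ℝ) : frob A = Real.sqrt (F2 A) := rfl

lemma frob_nonneg {m n : ℕ} (A : Matrix (Fin m) (Fin n) ℝ) : 0 ≤ frob A := Real.sqrt_nonneg _

lemma frob_sq {m n : ℕ} (A : Matrix (Fin m) (Fin n) ℝ) : frob A ^ 2 = F2 A :=
  Real.sq_sqrt (F2_nonneg A)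

lemma abs_inner_le_frob {a b : ℕ} (X Y : Matrix (Fin a) (Fin b) ℝ) :
    |∑ i, ∑ j, X i j * Y i j| ≤ frob X * frob Y := by
  have h : (∑ i, ∑ j, X i j * Y i j) ^ 2 ≤ F2 X * F2 Y := by
    have h1 : ∑ i, ∑ j, X i j * Y i j = ∑ p : Fin a × Fin b, X p.1 p.2 * Y p.1 p.2 :=
      (Fintype.sum_prod_type' _).symm
    have h2 : F2 X = ∑ p : Fin a × Fin b, X p.1 p.2 ^ 2 := (Fintype.sum_prod_type' _).symm
    have h3 : F2 Y = ∑ p : Fin a × Fin b, Y p.1 p.2 ^ 2 := (Fintype.sum_prod_type' _).symm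
    rw [h1, h2, h3]
    exact Finset.sum_mul_sq_le_sq_mul_sq Finset.univ _ _
  calc |∑ i, ∑ j, X i j * Y i j| = Real.sqrt ((∑ i, ∑ j, X i j * Y i j) ^ 2) :=
        (Real.sqrt_sq_eq_abs _).symm
    _ ≤ Real.sqrt (F2 X * F2 Y) := Real.sqrt_le_sqrt h
    _ = frob X * frob Y := by
        rw [Real.sqrt_mul (F2_nonneg X), frob_eq, frob_eq]

lemma F2_mul_le {a b c : ℕ} (N : Matrix (Fin a) (Fin b) ℝ) (Y : Matrix (Fin b) (Fin c) ℝ) :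
    F2 (N * Y) ≤ opn N ^ 2 * F2 Y := by
  unfold F2
  rw [Finset.sum_comm]
  have hY : ∀ col : Fin c, ∑ i, (N * Y) i col ^ 2 ≤ opn N ^ 2 * ∑ j, Y j col ^ 2 := by
    intro col
    have h1 : ∀ i, (N * Y) i col = N.mulVec (fun j => Y j col) i := by
      intro i; simp [Matrix.mul_apply, Matrix.mulVec, dotProduct]
    calc ∑ i, (N * Y) i col ^ 2 = ∑ i, N.mulVec (fun j => Y j col) i ^ 2 :=
          Finset.sum_congr rfl fun i _ => by rw [h1 i]
      _ ≤ opn N ^ 2 * ∑ j, Y j col ^ 2 := opn_mulVec_sq N _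
  calc ∑ col, ∑ i, (N * Y) i col ^ 2 ≤ ∑ col, opn N ^ 2 * ∑ j, Y j col ^ 2 :=
        Finset.sum_le_sum fun col _ => hY col
    _ = opn N ^ 2 * ∑ col, ∑ j, Y j col ^ 2 := by rw [Finset.mul_sum]
    _ = opn N ^ 2 * ∑ j, ∑ col, Y j col ^ 2 := by rw [Finset.sum_comm]

lemma ortho_F2_le {n r m : ℕ} {U : Matrix (Fin n) (Fin r) ℝ} (hU : Uᵀ * U = 1)
    (Δ : Matrix (Fin n) (Fin m) ℝ) : F2 (Uᵀ * Δ) ≤ F2 Δ := by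
  have hUb : ∀ y : Fin r → ℝ, ∑ i, U.mulVec y i ^ 2 ≤ (1:ℝ) ^ 2 * ∑ j, y j ^ 2 := by
    intro y
    have h1 : ∀ i, U.mulVec y i = ∑ j, y j * U i j := by
      intro i
      simp only [Matrix.mulVec, dotProduct]
      exact Finset.sum_congr rfl fun j _ => by ring
    have h2 : ∑ i, U.mulVec y i ^ 2 = ∑ j, y j * y j := by
      calc ∑ i, U.mulVec y i ^ 2
          = ∑ i, (∑ j, y j * U i j) * (∑ k, y k * U i k) := by
            refine Finset.sum_congr rfl fun i _ => ?_
            rw [h1 i, sq]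
        _ = ∑ j, y j * y j := contract_ortho hU y y
    rw [h2, one_pow, one_mul]
    exact le_of_eq (Finset.sum_congr rfl fun j _ => (sq (y j)).symm)
  have hdual := dual_bound U 1 hUb
  unfold F2
  rw [Finset.sum_comm, Finset.sum_comm (γ := Fin n)]
  refine Finset.sum_le_sum fun c _ => ?_
  have h3 : ∀ j, (Uᵀ * Δ) j c = Uᵀ.mulVec (fun i => Δ i c) j := by
    intro j; simp [Matrix.mul_apply, Matrix.mulVec, dotProduct]
  calc ∑ j, (Uᵀ * Δ) j c ^ 2 = ∑ j, Uᵀ.mulVec (fun i => Δ i c) j ^ 2 :=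
        Finset.sum_congr rfl fun j _ => by rw [h3 j]
    _ ≤ (1:ℝ) ^ 2 * ∑ i, Δ i c ^ 2 := hdual _
    _ = ∑ i, Δ i c ^ 2 := by rw [one_pow, one_mul]

lemma slice_opn_le {r1 r2 r3 : ℕ} (C : Fin r1 → Fin r2 → Fin r3 → ℝ) (j3 : Fin r3) :
    opn (Matrix.of fun j2 j1 => C j1 j2 j3)
      ≤ opn (Matrix.of fun j (p : Fin r1 × Fin r3) => C p.1 j p.2) := by
  set M2 := Matrix.of fun j (p : Fin r1 × Fin r3) => C p.1 j p.2 with hM2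
  refine opn_le_of_bound _ _ (opn_nonneg M2) fun v hv => ?_
  set w : Fin r1 × Fin r3 → ℝ := fun p => if p.2 = j3 then v p.1 else 0 with hwdef
  have hw2 : ∑ p, w p ^ 2 = ∑ a, v a ^ 2 := by
    rw [show (∑ p, w p ^ 2) = ∑ a, ∑ b, (if b = j3 then v a else 0) ^ 2 from
      Fintype.sum_prod_type' (f := fun a b => (if b = j3 then v a else 0) ^ 2)]
    refine Finset.sum_congr rfl fun a _ => ?_
    simp [apply_ite (fun x : ℝ => x ^ 2)]
  have hmv : ∀ j2, M2.mulVec w j2 = (Matrix.of fun j2 j1 => C j1 j2 j3).mulVec v j2 := by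
    intro j2
    show ∑ p : Fin r1 × Fin r3, M2 j2 p * w p = _
    rw [show (∑ p : Fin r1 × Fin r3, M2 j2 p * w p)
        = ∑ a, ∑ b, C a j2 b * (if b = j3 then v a else 0) from
      Fintype.sum_prod_type' (f := fun a b => C a j2 b * (if b = j3 then v a else 0))]
    simp only [mul_ite, mul_zero, Finset.sum_ite_eq', Finset.mem_univ, if_true]
    rfl
  calc ∑ j2, (Matrix.of fun j2 j1 => C j1 j2 j3).mulVec v j2 ^ 2
      = ∑ j2, M2.mulVec w j2 ^ 2 :=
        Finset.sum_congr rfl fun j2 _ => by rw [hmv j2]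
    _ ≤ opn M2 ^ 2 * ∑ p, w p ^ 2 := opn_mulVec_sq M2 w
    _ = opn M2 ^ 2 * ∑ a, v a ^ 2 := by rw [hw2]
    _ ≤ opn M2 ^ 2 * 1 := mul_le_mul_of_nonneg_left hv (by positivity)
    _ = opn M2 ^ 2 := mul_one _

lemma Ysum_le {r1 r2 r3 : ℕ} (C : Fin r1 → Fin r2 → Fin r3 → ℝ)
    (A : Matrix (Fin r1) (Fin r1) ℝ) :
    ∑ j3, F2 (A * Matrix.of fun j1 j2 => C j1 j2 j3)
      ≤ opn (Matrix.of fun i (p : Fin r2 × Fin r3) => C i p.1 p.2) ^ 2 * F2 A := by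
  set M1 := Matrix.of fun i (p : Fin r2 × Fin r3) => C i p.1 p.2 with hM1
  have hdual := dual_bound M1 (opn M1) (opn_mulVec_sq M1)
  have hentry : ∀ (j1 : Fin r1) (k2 : Fin r2) (j3 : Fin r3),
      (A * Matrix.of fun j1 j2 => C j1 j2 j3) j1 k2
        = M1ᵀ.mulVec (fun k1 => A j1 k1) (k2, j3) := by
    intro j1 k2 j3
    simp only [Matrix.mul_apply, Matrix.mulVec, dotProduct,
      Matrix.transpose_apply, Matrix.of_apply, hM1]
    exact Finset.sum_congr rfl fun k1 _ => by ring
  calc ∑ j3, F2 (A * Matrix.of fun j1 j2 => C j1 j2 j3)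
      = ∑ j3, ∑ j1, ∑ k2, ((A * Matrix.of fun j1 j2 => C j1 j2 j3) j1 k2) ^ 2 := rfl
    _ = ∑ j1, ∑ j3, ∑ k2, ((A * Matrix.of fun j1 j2 => C j1 j2 j3) j1 k2) ^ 2 :=
        Finset.sum_comm
    _ = ∑ j1, ∑ k2, ∑ j3, ((A * Matrix.of fun j1 j2 => C j1 j2 j3) j1 k2) ^ 2 :=
        Finset.sum_congr rfl fun _ _ => Finset.sum_comm
    _ = ∑ j1, ∑ p : Fin r2 × Fin r3, (M1ᵀ.mulVec (fun k1 => A j1 k1) p) ^ 2 := by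
        refine Finset.sum_congr rfl fun j1 _ => ?_
        rw [show (∑ p : Fin r2 × Fin r3, (M1ᵀ.mulVec (fun k1 => A j1 k1) p) ^ 2)
            = ∑ k2, ∑ j3, (M1ᵀ.mulVec (fun k1 => A j1 k1) (k2, j3)) ^ 2 from
          Fintype.sum_prod_type' (f := fun k2 j3 => (M1ᵀ.mulVec (fun k1 => A j1 k1) (k2, j3)) ^ 2)]
        exact Finset.sum_congr rfl fun k2 _ => Finset.sum_congr rfl fun j3 _ => by
          rw [hentry j1 k2 j3]
    _ ≤ ∑ j1, opn M1 ^ 2 * ∑ k1, A j1 k1 ^ 2 :=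
        Finset.sum_le_sum fun j1 _ => hdual _
    _ = opn M1 ^ 2 * F2 A := by rw [← Finset.mul_sum]; rfl

lemma F2_A_eq {n1 r1 : ℕ} (Δ1 U1s : Matrix (Fin n1) (Fin r1) ℝ) :
    F2 (Matrix.of fun j1 k1 => ∑ i, Δ1 i j1 * U1s i k1) = F2 (U1sᵀ * Δ1) := by
  unfold F2
  rw [Finset.sum_comm]
  refine Finset.sum_congr rfl fun k1 _ => Finset.sum_congr rfl fun j1 _ => ?_
  congr 1
  simp only [Matrix.mul_apply, Matrix.transpose_apply, Matrix.of_apply]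
  exact Finset.sum_congr rfl fun i _ => by ring

/-- Cross-term bound:
`|⟨C ×₁ Δ1 ×₂ U2' ×₃ U3', C ×₁ U1* ×₂ Δ2 ×₃ U3'⟩| ≤ √r3 Λ̄(C)² ‖U1*ᵀΔ1‖_F ‖U2'ᵀΔ2‖_F ≤
 √r3 Λ̄(C)² ‖Δ1‖_F ‖Δ2‖_F`. -/
theorem stmt15 {n1 n2 n3 r1 r2 r3 : ℕ}
    (C : Fin r1 → Fin r2 → Fin r3 → ℝ)
    (Δ1 : Matrix (Fin n1) (Fin r1) ℝ) (Δ2 : Matrix (Fin n2) (Fin r2) ℝ)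
    (U1s : Matrix (Fin n1) (Fin r1) ℝ)
    (U2' : Matrix (Fin n2) (Fin r2) ℝ) (U3' : Matrix (Fin n3) (Fin r3) ℝ)
    (hU1s : U1sᵀ * U1s = 1) (hU2 : U2'ᵀ * U2' = 1) (hU3 : U3'ᵀ * U3' = 1) :
    |tinner (mlprod C Δ1 U2' U3') (mlprod C U1s Δ2 U3')| ≤
        Real.sqrt r3 * lambdaBar C ^ 2 * frob (U1sᵀ * Δ1) * frob (U2'ᵀ * Δ2) ∧
      Real.sqrt r3 * lambdaBar C ^ 2 * frob (U1sᵀ * Δ1) * frob (U2'ᵀ * Δ2) ≤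
        Real.sqrt r3 * lambdaBar C ^ 2 * frob Δ1 * frob Δ2 := by
  set Λ := lambdaBar C with hΛdef
  have hM1le : opn (Matrix.of fun i (p : Fin r2 × Fin r3) => C i p.1 p.2) ≤ Λ :=
    le_max_left _ _
  have hM2le : opn (Matrix.of fun j (p : Fin r1 × Fin r3) => C p.1 j p.2) ≤ Λ :=
    le_trans (le_max_left _ _) (le_max_right _ _)
  have hΛnn : 0 ≤ Λ := le_trans (opn_nonneg _) hM1le
  set A : Matrix (Fin r1) (Fin r1) ℝ :=
    Matrix.of fun j1 k1 => ∑ i, Δ1 i j1 * U1s i k1 with hA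
  set B : Matrix (Fin r2) (Fin r2) ℝ := U2'ᵀ * Δ2 with hB
  have hBe : ∀ j2 k2, (∑ i, U2' i j2 * Δ2 i k2) = B j2 k2 := by
    intro j2 k2
    simp only [hB, Matrix.mul_apply, Matrix.transpose_apply]
  set N : Fin r3 → Matrix (Fin r2) (Fin r1) ℝ :=
    fun j3 => Matrix.of fun j2 j1 => C j1 j2 j3 with hN
  set Y : Fin r3 → Matrix (Fin r1) (Fin r2) ℝ :=
    fun j3 => A * Matrix.of fun j1 j2 => C j1 j2 j3 with hY
  have hSentry : ∀ j3 j2 k2,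
      (∑ j1, ∑ k1, (C j1 j2 j3 * C k1 k2 j3) * ∑ i, Δ1 i j1 * U1s i k1)
        = (N j3 * Y j3) j2 k2 := by
    intro j3 j2 k2
    simp only [hN, hY, Matrix.mul_apply, Matrix.of_apply]
    refine Finset.sum_congr rfl fun j1 _ => ?_
    rw [Finset.mul_sum]
    refine Finset.sum_congr rfl fun k1 _ => ?_
    simp only [hA, Matrix.of_apply]
    ring
  have h1 : |tinner (mlprod C Δ1 U2' U3') (mlprod C U1s Δ2 U3')|
      ≤ ∑ j3, |∑ j2, ∑ k2, (N j3 * Y j3) j2 k2 * B j2 k2| := by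
    rw [key_identity C Δ1 Δ2 U1s U2' U3' hU3]
    rw [Finset.sum_congr rfl fun j3 (_ : j3 ∈ Finset.univ) =>
      Finset.sum_congr rfl fun j2 _ => Finset.sum_congr rfl fun k2 _ => by
        rw [hSentry j3 j2 k2, hBe j2 k2]]
    exact Finset.abs_sum_le_sum_abs _ _
  have h3 : ∀ j3, frob (N j3 * Y j3) ≤ Λ * frob (Y j3) := by
    intro j3
    have hNle : opn (N j3) ≤ Λ := (slice_opn_le C j3).trans hM2le
    have hb : F2 (N j3 * Y j3) ≤ Λ ^ 2 * F2 (Y j3) :=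
      (F2_mul_le (N j3) (Y j3)).trans
        (mul_le_mul_of_nonneg_right
          (pow_le_pow_left₀ (opn_nonneg _) hNle 2) (F2_nonneg _))
    calc frob (N j3 * Y j3) = Real.sqrt (F2 (N j3 * Y j3)) := frob_eq _
      _ ≤ Real.sqrt (Λ ^ 2 * F2 (Y j3)) := Real.sqrt_le_sqrt hb
      _ = Λ * frob (Y j3) := by
          rw [Real.sqrt_mul (by positivity), Real.sqrt_sq hΛnn, frob_eq]
  have h4 : ∑ j3, frob (Y j3) ≤ Real.sqrt r3 * (Λ * frob A) := by
    have hcs : (∑ j3, frob (Y j3)) ^ 2 ≤ (r3 : ℝ) * ∑ j3, F2 (Y j3) := by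
      have := Finset.sum_mul_sq_le_sq_mul_sq Finset.univ
        (fun _ : Fin r3 => (1 : ℝ)) (fun j3 => frob (Y j3))
      simpa [frob_sq] using this
    have hsum_le : ∑ j3, F2 (Y j3) ≤ Λ ^ 2 * F2 A :=
      (Ysum_le C A).trans
        (mul_le_mul_of_nonneg_right
          (pow_le_pow_left₀ (opn_nonneg _) hM1le 2) (F2_nonneg _))
    have hnn : 0 ≤ ∑ j3, frob (Y j3) := Finset.sum_nonneg fun _ _ => frob_nonneg _
    calc ∑ j3, frob (Y j3) = Real.sqrt ((∑ j3, frob (Y j3)) ^ 2) :=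
          (Real.sqrt_sq hnn).symm
      _ ≤ Real.sqrt ((r3 : ℝ) * (Λ ^ 2 * F2 A)) :=
          Real.sqrt_le_sqrt
            (hcs.trans (mul_le_mul_of_nonneg_left hsum_le (Nat.cast_nonneg r3)))
      _ = Real.sqrt r3 * (Λ * frob A) := by
          rw [Real.sqrt_mul (Nat.cast_nonneg r3), Real.sqrt_mul (by positivity),
            Real.sqrt_sq hΛnn, frob_eq]
  have hfrobA : frob A = frob (U1sᵀ * Δ1) := by
    rw [frob_eq, frob_eq, F2_A_eq]
  constructor
  · calc |tinner (mlprod C Δ1 U2' U3') (mlprod C U1s Δ2 U3')|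
        ≤ ∑ j3, |∑ j2, ∑ k2, (N j3 * Y j3) j2 k2 * B j2 k2| := h1
      _ ≤ ∑ j3, frob (N j3 * Y j3) * frob B :=
          Finset.sum_le_sum fun j3 _ => abs_inner_le_frob _ _
      _ ≤ ∑ j3, (Λ * frob (Y j3)) * frob B :=
          Finset.sum_le_sum fun j3 _ =>
            mul_le_mul_of_nonneg_right (h3 j3) (frob_nonneg B)
      _ = (Λ * ∑ j3, frob (Y j3)) * frob B := by
          simp only [Finset.mul_sum, Finset.sum_mul]
      _ ≤ (Λ * (Real.sqrt r3 * (Λ * frob A))) * frob B :=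
          mul_le_mul_of_nonneg_right
            (mul_le_mul_of_nonneg_left h4 hΛnn) (frob_nonneg B)
      _ = Real.sqrt r3 * Λ ^ 2 * frob A * frob B := by ring
      _ = Real.sqrt r3 * Λ ^ 2 * frob (U1sᵀ * Δ1) * frob B := by rw [hfrobA]
  · have ha : frob (U1sᵀ * Δ1) ≤ frob Δ1 :=
      Real.sqrt_le_sqrt (ortho_F2_le hU1s Δ1)
    have hb : frob B ≤ frob Δ2 := Real.sqrt_le_sqrt (ortho_F2_le hU2 Δ2)
    have hpos : 0 ≤ Real.sqrt r3 * Λ ^ 2 := by positivity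
    have h5 : Real.sqrt r3 * Λ ^ 2 * frob (U1sᵀ * Δ1)
        ≤ Real.sqrt r3 * Λ ^ 2 * frob Δ1 := by
      exact mul_le_mul_of_nonneg_left ha hpos
    exact mul_le_mul h5 hb (frob_nonneg _) (mul_nonneg hpos (frob_nonneg _))
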